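/- arXiv:2504.14572 — 8 statements merged into one kernel-verified Lean document; each statement's English description precedes it below -/
import Mathlib

section
/- Let n ≥ 1 and let D be the multiset in ℝ consisting of 2n−1 copies of 0 and one copy of 1. Then the optimal squared loss is L_D^⋆ = (2n−1)/(2n)², and for every choice of n points z₁,…,z_n from D, L_D((z₁+⋯+z_n)/n) ≥ (2n/(2n−1)) · L_D^⋆. -/
/-!
The squared loss splits as `L_D(h) = L_D(μ) + (h - μ)²` around the mean `μ`, so `L_D^⋆` is attained
at `μ`. For `D` made of `m` zeros and a single one, `μ = 1/(m+1)` and `L_D^⋆ = m/(m+1)²`. With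
`m + 1 = 2n`, an average of `n` points of `D` is `k/n = 2k/(m+1)` for an integer `k`; its distance
to `μ` is `(2k-1)/(m+1)`, and `2k-1` is odd, hence the excess loss is at least `1/(m+1)²`.
-/
namespace Multiset

noncomputable def mean (D : Multiset ℝ) : ℝ := D.sum / D.card

noncomputable def sqLoss (D : Multiset ℝ) (h : ℝ) : ℝ := (D.map fun z => (h - z) ^ 2).sum / D.card

theorem sum_map_sub_sq (D : Multiset ℝ) (h : ℝ) :
    (D.map fun z => (h - z) ^ 2).sum = D.card * h ^ 2 - 2 * h * D.sum + (D.map (· ^ 2)).sum := by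
  induction D using Multiset.induction_on with
  | empty => simp
  | cons a D ih => simp only [map_cons, sum_cons, card_cons, ih]; push_cast; ring

theorem sqLoss_eq_sqLoss_mean_add_sq {D : Multiset ℝ} (hD : D ≠ 0) (h : ℝ) :
    D.sqLoss h = D.sqLoss D.mean + (h - D.mean) ^ 2 := by
  have hN : (D.card : ℝ) ≠ 0 := by simpa using hD
  simp only [sqLoss, mean, sum_map_sub_sq]
  field_simp
  ring

theorem sqLoss_mean_le_sqLoss {D : Multiset ℝ} (hD : D ≠ 0) (h : ℝ) : D.sqLoss D.mean ≤ D.sqLoss h := by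
  rw [sqLoss_eq_sqLoss_mean_add_sq hD h]
  exact le_add_of_nonneg_right (sq_nonneg _)

theorem mean_replicate_zero_add_one (m : ℕ) :
    (replicate m (0 : ℝ) + {1}).mean = 1 / (m + 1) := by
  simp [mean]

theorem sqLoss_replicate_zero_add_one (m : ℕ) (h : ℝ) :
    (replicate m (0 : ℝ) + {1}).sqLoss h = (m * h ^ 2 + (h - 1) ^ 2) / (m + 1) := by
  simp [sqLoss]

theorem sqLoss_mean_replicate_zero_add_one (m : ℕ) :
    (replicate m (0 : ℝ) + {1}).sqLoss (replicate m (0 : ℝ) + {1}).mean = m / (m + 1) ^ 2 := by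
  rw [sqLoss_replicate_zero_add_one, mean_replicate_zero_add_one]
  field_simp
  ring

theorem one_div_le_sqLoss_replicate_zero_add_one (m : ℕ) (k : ℤ) :
    1 / (m + 1) ≤ (replicate m (0 : ℝ) + {1}).sqLoss (2 * k / (m + 1)) := by
  have hD : replicate m (0 : ℝ) + {1} ≠ 0 := by simp
  have hodd : (1 : ℝ) ≤ (2 * k - 1) ^ 2 := by
    have : (2 * k - 1 : ℤ) ≠ 0 := by omega
    exact_mod_cast one_le_sq_iff_one_le_abs _ |>.mpr (Int.one_le_abs this)
  have hpos : (0 : ℝ) < m + 1 := by positivity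
  rw [sqLoss_eq_sqLoss_mean_add_sq hD, sqLoss_mean_replicate_zero_add_one,
    mean_replicate_zero_add_one]
  calc 1 / ((m : ℝ) + 1) ≤ (m + (2 * k - 1) ^ 2) / (m + 1) ^ 2 := by
        rw [div_le_div_iff₀ hpos (by positivity)]; nlinarith
    _ = m / (m + 1) ^ 2 + (2 * k / (m + 1) - 1 / (m + 1)) ^ 2 := by field_simp

end Multiset

open Multiset in
theorem mean_estimation_lower_bound_example
    (n : ℕ) (hn : 1 ≤ n)
    (D : Multiset ℝ) (hD : D = Multiset.replicate (2*n - 1) (0:ℝ) + {(1:ℝ)})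
    (L : ℝ → ℝ) (hL : ∀ h, L h = (D.map (fun z => (h - z)^2)).sum / D.card) :
    (∀ h, ((2*n - 1 : ℕ) : ℝ) / (2*n)^2 ≤ L h) ∧
    (∃ h, L h = ((2*n - 1 : ℕ) : ℝ) / (2*n)^2) ∧
    (∀ z : Fin n → ℝ, (∀ i, z i ∈ D) →
      (2*n / (2*n - 1 : ℝ)) * (((2*n - 1 : ℕ) : ℝ) / (2*n)^2) ≤ L ((∑ i, z i) / n)) := by
  obtain rfl : L = D.sqLoss := funext hL
  subst hD
  set m := 2 * n - 1
  have hm : (m : ℝ) + 1 = 2 * n := by rw [Nat.cast_sub (by omega)]; push_cast; ring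
  have hopt := sqLoss_mean_replicate_zero_add_one m
  rw [hm] at hopt
  refine ⟨fun h => hopt ▸ sqLoss_mean_le_sqLoss (by simp) h, ⟨_, hopt⟩, fun z hz => ?_⟩
  have hz_int : ∀ i, ∃ j : ℤ, z i = j := fun i => by
    rcases mem_add.mp (hz i) with h | h
    · exact ⟨0, by simp [eq_of_mem_replicate h]⟩
    · exact ⟨1, by simp [mem_singleton.mp h]⟩
  choose j hj using hz_int
  have hn0 : (n : ℝ) ≠ 0 := by positivity
  have hm0 : (m : ℝ) ≠ 0 := by norm_cast; omega
  have havg : (∑ i, z i) / n = 2 * (∑ i, j i : ℤ) / (m + 1) := by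
    rw [hm]; push_cast [hj]; field_simp
  calc 2 * n / (2 * n - 1 : ℝ) * (m / (2 * n) ^ 2) = 1 / (m + 1) := by
        rw [show (2 * n - 1 : ℝ) = m by linarith, ← hm]; field_simp
    _ ≤ _ := havg ▸ one_div_le_sqLoss_replicate_zero_add_one m _
end

section
/- For every n ≥ 1 and every finite multiset D ⊆ ℝ with L_D^⋆ > 0, there exist n points z₁,…,z_n ∈ D such that L_D((z₁+⋯+z_n)/n) ≤ (2n/(2n−1)) · L_D^⋆. -/
lemma sum_sq_decomp (D : Multiset ℝ) (μ h : ℝ) :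
    (D.map (fun z => (h - z)^2)).sum
      = (D.map (fun z => (μ - z)^2)).sum + D.card * (h - μ)^2
        + 2*(h - μ)*(D.card * μ - D.sum) := by
  induction D using Multiset.induction with
  | empty => simp
  | cons x s ih =>
    simp only [Multiset.map_cons, Multiset.sum_cons, Multiset.card_cons]
    push_cast
    nlinarith [ih]

lemma exists_k (n : ℕ) (hn : 1 ≤ n) (α β : ℝ) (hα : 0 ≤ α) (hβ : 0 ≤ β) :
    ∃ k : ℕ, k ≤ n ∧ (2*(n:ℝ) - 1) * ((n:ℝ)*β - k*(α+β))^2 ≤ (n:ℝ)^2*(α*β) := by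
  have hn1 : (1:ℝ) ≤ n := by exact_mod_cast hn
  have hnR : (0:ℝ) < n := by linarith
  have h2n : (1:ℝ) ≤ 2*n - 1 := by linarith
  by_cases h1 : (2*(n:ℝ) - 1)*α ≤ β
  · refine ⟨n, le_refl n, ?_⟩
    have heq : (n:ℝ)*β - (n:ℝ)*(α+β) = -((n:ℝ)*α) := by ring
    rw [heq]
    have : (2*(n:ℝ)-1)*α*α ≤ β*α := by nlinarith
    nlinarith
  by_cases h2 : (2*(n:ℝ) - 1)*β ≤ α
  · refine ⟨0, Nat.zero_le n, ?_⟩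
    push_cast
    have : (2*(n:ℝ)-1)*β*β ≤ α*β := by nlinarith
    nlinarith
  push_neg at h1 h2
  have hαpos : 0 < α := by nlinarith
  have hβpos : 0 < β := by nlinarith
  have hs : 0 < α + β := by linarith
  have key : (2*(n:ℝ) - 1) * (α+β)^2 ≤ 4*(n:ℝ)^2*(α*β) := by
    nlinarith [mul_nonneg (le_of_lt (by linarith : (0:ℝ) < (2*(n:ℝ)-1)*α - β))
      (le_of_lt (by linarith : (0:ℝ) < (2*(n:ℝ)-1)*β - α))]
  set x := (n:ℝ)*β/(α+β) with hx
  have hx0 : 0 ≤ x := by positivity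
  set k₀ := ⌊x⌋₊ with hk₀
  have hk₀le : (k₀:ℝ) ≤ x := Nat.floor_le hx0
  have hk₀lt : x < k₀ + 1 := Nat.lt_floor_add_one x
  have hxn : x < n := by
    rw [hx, div_lt_iff₀ hs]; nlinarith
  have hkn : k₀ < n := by exact_mod_cast lt_of_le_of_lt hk₀le hxn
  have ht0 : 0 ≤ (n:ℝ)*β - k₀*(α+β) := by
    have := (le_div_iff₀ hs).mp hk₀le
    linarith
  have ht1 : (n:ℝ)*β - k₀*(α+β) < α+β := by
    have := (div_lt_iff₀ hs).mp hk₀lt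
    nlinarith
  by_cases he : (n:ℝ)*β - k₀*(α+β) ≤ (α+β)/2
  · refine ⟨k₀, le_of_lt hkn, ?_⟩
    have hsq : ((n:ℝ)*β - k₀*(α+β))^2 ≤ (α+β)^2/4 := by nlinarith
    have := mul_le_mul_of_nonneg_left hsq (by linarith : (0:ℝ) ≤ 2*(n:ℝ)-1)
    linarith
  · push_neg at he
    refine ⟨k₀+1, hkn, ?_⟩
    push_cast
    have heq : (n:ℝ)*β - ((k₀:ℝ)+1)*(α+β) = ((n:ℝ)*β - k₀*(α+β)) - (α+β) := by ring
    rw [heq]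
    have hsq : (((n:ℝ)*β - k₀*(α+β)) - (α+β))^2 ≤ (α+β)^2/4 := by nlinarith
    have := mul_le_mul_of_nonneg_left hsq (by linarith : (0:ℝ) ≤ 2*(n:ℝ)-1)
    linarith

theorem mean_estimation_upper_bound
    (n : ℕ) (hn : 1 ≤ n) (D : Multiset ℝ) (hD : D ≠ 0)
    (L : ℝ → ℝ) (hL : ∀ h, L h = (D.map (fun z => (h - z)^2)).sum / D.card)
    (μ : ℝ) (hμ : μ = D.sum / D.card)
    (hmin : ∀ h, L μ ≤ L h)
    (hpos : 0 < L μ) :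
    ∃ z : Fin n → ℝ, (∀ i, z i ∈ D) ∧
      L ((∑ i, z i) / n) ≤ (2*n / (2*n - 1)) * L μ := by
  have hcard : 0 < D.card := Multiset.card_pos.mpr hD
  have hcardR : (0:ℝ) < D.card := by exact_mod_cast hcard
  have hn1 : (1:ℝ) ≤ n := by exact_mod_cast hn
  have hnR : (0:ℝ) < n := by linarith
  have h2n : (1:ℝ) ≤ 2*(n:ℝ) - 1 := by linarith
  have hsum : D.sum = (D.card : ℝ) * μ := by
    rw [hμ]; field_simp
  have hLdecomp : ∀ h, L h = L μ + (h - μ)^2 := by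
    intro h
    rw [hL h, hL μ, sum_sq_decomp D μ h, sum_sq_decomp D μ μ, hsum]
    field_simp
    ring
  have hzero : (D.map (fun z => z - μ)).sum = 0 := by
    rw [Multiset.sum_map_sub]
    simp [Multiset.map_const', Multiset.sum_replicate, nsmul_eq_mul, hsum]
  -- existence of elements on each side of μ
  have hbelow : ∃ a ∈ D, a ≤ μ := by
    by_contra hc
    push_neg at hc
    obtain ⟨w, hw⟩ := Multiset.exists_mem_of_ne_zero hD
    have hD' : D = w ::ₘ D.erase w := (Multiset.cons_erase hw).symm
    have ht : (0:ℝ) ≤ ((D.erase w).map (fun z => z - μ)).sum :=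
      Multiset.sum_nonneg (by
        intro y hy
        obtain ⟨z, hz, rfl⟩ := Multiset.mem_map.mp hy
        have := hc z (Multiset.mem_of_mem_erase hz)
        linarith)
    rw [hD', Multiset.map_cons, Multiset.sum_cons] at hzero
    have := hc w hw
    linarith
  have hzero2 : (D.map (fun z => μ - z)).sum = 0 := by
    rw [Multiset.sum_map_sub]
    simp [Multiset.map_const', Multiset.sum_replicate, nsmul_eq_mul, hsum]
  have habove : ∃ b ∈ D, μ ≤ b := by
    by_contra hc
    push_neg at hc
    obtain ⟨w, hw⟩ := Multiset.exists_mem_of_ne_zero hD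
    have hD' : D = w ::ₘ D.erase w := (Multiset.cons_erase hw).symm
    have ht : (0:ℝ) ≤ ((D.erase w).map (fun z => μ - z)).sum :=
      Multiset.sum_nonneg (by
        intro y hy
        obtain ⟨z, hz, rfl⟩ := Multiset.mem_map.mp hy
        have := hc z (Multiset.mem_of_mem_erase hz)
        linarith)
    rw [hD', Multiset.map_cons, Multiset.sum_cons] at hzero2
    have := hc w hw
    linarith
  -- choose extremal a, b adjacent to μ
  have hsetA : ((D.toFinset.filter (fun z => z ≤ μ)).Nonempty) := by
    obtain ⟨a, haD, ha⟩ := hbelow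
    exact ⟨a, Finset.mem_filter.mpr ⟨Multiset.mem_toFinset.mpr haD, ha⟩⟩
  have hsetB : ((D.toFinset.filter (fun z => μ ≤ z)).Nonempty) := by
    obtain ⟨b, hbD, hb⟩ := habove
    exact ⟨b, Finset.mem_filter.mpr ⟨Multiset.mem_toFinset.mpr hbD, hb⟩⟩
  set a := (D.toFinset.filter (fun z => z ≤ μ)).max' hsetA with ha_def
  set b := (D.toFinset.filter (fun z => μ ≤ z)).min' hsetB with hb_def
  have haD : a ∈ D := by
    have := (D.toFinset.filter (fun z => z ≤ μ)).max'_mem hsetA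
    exact Multiset.mem_toFinset.mp (Finset.mem_filter.mp this).1
  have haμ : a ≤ μ := by
    have := (D.toFinset.filter (fun z => z ≤ μ)).max'_mem hsetA
    exact (Finset.mem_filter.mp this).2
  have hbD : b ∈ D := by
    have := (D.toFinset.filter (fun z => μ ≤ z)).min'_mem hsetB
    exact Multiset.mem_toFinset.mp (Finset.mem_filter.mp this).1
  have hbμ : μ ≤ b := by
    have := (D.toFinset.filter (fun z => μ ≤ z)).min'_mem hsetB
    exact (Finset.mem_filter.mp this).2
  have hsep : ∀ z ∈ D, z ≤ a ∨ b ≤ z := by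
    intro z hz
    by_cases h : z ≤ μ
    · exact Or.inl (Finset.le_max' (D.toFinset.filter (fun z => z ≤ μ)) z
        (Finset.mem_filter.mpr ⟨Multiset.mem_toFinset.mpr hz, h⟩))
    · exact Or.inr (Finset.min'_le (D.toFinset.filter (fun z => μ ≤ z)) z
        (Finset.mem_filter.mpr ⟨Multiset.mem_toFinset.mpr hz, le_of_lt (lt_of_not_ge h)⟩))
  set α := μ - a with hα_def
  set β := b - μ with hβ_def
  have hα : 0 ≤ α := by simp [hα_def]; linarith
  have hβ : 0 ≤ β := by simp [hβ_def]; linarith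
  -- variance lower bound : α*β ≤ L μ
  have hvar : α * β ≤ L μ := by
    have hpt : ∀ z ∈ D, (β - α)*(z - μ) + α*β ≤ (μ - z)^2 := by
      intro z hz
      rcases hsep z hz with h | h
      · nlinarith [h, haμ, hbμ]
      · nlinarith [h, haμ, hbμ]
    have hsums : (D.map (fun z => (β - α)*(z - μ) + α*β)).sum
        ≤ (D.map (fun z => (μ - z)^2)).sum :=
      Multiset.sum_map_le_sum_map _ _ hpt
    have hlin : (D.map (fun z => (β - α)*(z - μ) + α*β)).sum
        = (β - α) * (D.map (fun z => z - μ)).sum + D.card * (α*β) := by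
      rw [Multiset.sum_map_add]
      simp only [Multiset.sum_map_mul_left, Multiset.map_const', Multiset.sum_replicate,
        nsmul_eq_mul]
    rw [hlin, hzero, mul_zero, zero_add] at hsums
    rw [hL μ, le_div_iff₀ hcardR]
    linarith
  -- pick k
  obtain ⟨k, hkn, hk⟩ := exists_k n hn α β hα hβ
  refine ⟨fun i => if (i:ℕ) < k then a else b, fun i => by dsimp only; split <;> assumption, ?_⟩
  have hsum_z : ∑ i : Fin n, (if (i:ℕ) < k then a else b) = k*a + ((n:ℝ)-k)*b := by
    rw [Fin.sum_univ_eq_sum_range (fun i => if i < k then a else b)]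
    rw [Finset.sum_ite, Finset.filter_not]
    have hf : Finset.filter (fun x => x < k) (Finset.range n) = Finset.range k := by
      ext x; simp; omega
    rw [hf, Finset.sum_const, Finset.sum_const,
      Finset.card_sdiff_of_subset (Finset.range_subset_range.mpr hkn)]
    simp only [Finset.card_range, nsmul_eq_mul]
    push_cast [Nat.cast_sub hkn]
    ring
  rw [hsum_z, hLdecomp]
  have herr : (k*a + ((n:ℝ)-k)*b)/n - μ = ((n:ℝ)*β - k*(α+β))/n := by
    field_simp [hα_def, hβ_def]
    ring
  rw [herr]
  have herr2 : (((n:ℝ)*β - k*(α+β))/n)^2 = ((n:ℝ)*β - k*(α+β))^2 / n^2 := by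
    rw [div_pow]
  rw [herr2]
  -- (2n-1) * err^2 ≤ α*β ≤ L μ
  have h2 : (2*(n:ℝ) - 1) * (((n:ℝ)*β - k*(α+β))^2 / n^2) ≤ α*β := by
    rw [mul_div_assoc', div_le_iff₀ (by positivity : (0:ℝ) < (n:ℝ)^2)]
    linarith
  have h3 : ((n:ℝ)*β - k*(α+β))^2 / n^2 ≤ L μ / (2*(n:ℝ) - 1) := by
    rw [le_div_iff₀ (by linarith : (0:ℝ) < 2*(n:ℝ) - 1)]
    nlinarith
  have hfin : L μ + L μ / (2*(n:ℝ) - 1) = (2*(n:ℝ) / (2*(n:ℝ) - 1)) * L μ := by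
    field_simp
    ring
  calc L μ + ((n:ℝ)*β - k*(α+β))^2 / n^2 ≤ L μ + L μ / (2*(n:ℝ) - 1) := by linarith
  _ = (2*(n:ℝ) / (2*(n:ℝ) - 1)) * L μ := hfin
end

section
/- Let K ⊆ ℝ^d be closed and convex, let f₁,…,f_n : K → ℝ be strictly convex functions each attaining a minimum on K, and let g = Σᵢ λᵢ fᵢ with λᵢ ≥ 0 and Σᵢ λᵢ = 1. Then there exist at most d+1 indices i₁,…,i_{d+1} and nonnegative coefficients α₁,…,α_{d+1} summing to 1 such that g' = Σⱼ αⱼ f_{iⱼ} satisfies: the minimizer of g' on K equals the minimizer of g on K, and min_K g' ≤ min_K g. -/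
/-!
Let `x₀` minimise `g = ∑ λᵢ fᵢ` on `K`. The sum rule for subgradients relative to `K` yields
linear forms `vᵢ` with `fᵢ y ≥ fᵢ x₀ + vᵢ (y - x₀)` on `K` and `∑ λᵢ vᵢ = 0`. For two summands
`F + G` this is the sandwich theorem: an affine function separates the convex `F` from the concave
`F x₀ + G x₀ - G`, obtained by separating epigraph from hypograph; this needs `K` to have interior
points, which it has inside its affine span. Then `λ` is a nonnegative solution of the `d + 1`
linear equations `∑ αᵢ = 1`, `∑ αᵢ vᵢ = 0`, and Carathéodory's exchange argument, moving along an
affine dependence of the `vᵢ` in the direction that does not increase `∑ αᵢ fᵢ x₀`, leaves a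
solution with at most `d + 1` nonzero entries. Every such `α` makes `x₀` a minimiser of
`∑ αᵢ fᵢ`, and strict convexity makes `x₀` the only minimiser of `g`.
-/

open Finset Module Topology

section Subgradient

variable {V : Type*} [AddCommGroup V] [Module ℝ V]

def IsSubgradientOn (K : Set V) (f : V → ℝ) (x₀ : V) (ℓ : Dual ℝ V) : Prop :=
  ∀ y ∈ K, f x₀ + ℓ (y - x₀) ≤ f y

variable {K : Set V} {x₀ : V}

theorem isSubgradientOn_zero_iff {f : V → ℝ} : IsSubgradientOn K f x₀ 0 ↔ IsMinOn f K x₀ := by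
  simp [IsSubgradientOn, isMinOn_iff]

theorem isSubgradientOn_const_mul_iff {f : V → ℝ} {ℓ : Dual ℝ V} {a : ℝ} (ha : 0 < a) :
    IsSubgradientOn K (fun y => a * f y) x₀ ℓ ↔ IsSubgradientOn K f x₀ (a⁻¹ • ℓ) := by
  refine forall₂_congr fun y _ => ?_
  dsimp only
  rw [LinearMap.smul_apply, smul_eq_mul, ← mul_le_mul_iff_right₀ ha (b := f x₀ + _), mul_add,
    mul_inv_cancel_left₀ ha.ne']

theorem isSubgradientOn_sum_mul {ι : Type*} {s : Finset ι} {f : ι → V → ℝ} {v : ι → Dual ℝ V}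
    {α : ι → ℝ} (hv : ∀ i ∈ s, IsSubgradientOn K (f i) x₀ (v i)) (hα : ∀ i ∈ s, 0 ≤ α i) :
    IsSubgradientOn K (fun y => ∑ i ∈ s, α i * f i y) x₀ (∑ i ∈ s, α i • v i) := fun y hy => by
  simp only [LinearMap.coe_sum, LinearMap.coe_smul, Finset.sum_apply, Pi.smul_apply, smul_eq_mul,
    ← sum_add_distrib, ← mul_add]
  exact sum_le_sum fun i hi => mul_le_mul_of_nonneg_left (hv i hi y hy) (hα i hi)

end Subgradient

section ConvexSum

variable {V ι : Type*} [AddCommGroup V] [Module ℝ V] {K : Set V} {s : Finset ι}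

theorem convexOn_sum {f : ι → V → ℝ} (hK : Convex ℝ K)
    (hf : ∀ i ∈ s, ConvexOn ℝ K (f i)) : ConvexOn ℝ K (fun y => ∑ i ∈ s, f i y) := by
  simpa only [← Finset.sum_apply] using
    Finset.sum_induction f (ConvexOn ℝ K) (fun _ _ => ConvexOn.add) (convexOn_const 0 hK) hf

theorem strictConvexOn_sum_mul {f : ι → V → ℝ} {w : ι → ℝ}
    (hf : ∀ i ∈ s, StrictConvexOn ℝ K (f i)) (hw : ∀ i ∈ s, 0 ≤ w i) (hpos : ∃ i ∈ s, 0 < w i) :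
    StrictConvexOn ℝ K (fun y => ∑ i ∈ s, w i * f i y) := by
  obtain ⟨j, hj, hwj⟩ := hpos
  refine ⟨(hf j hj).1, fun x hx y hy hxy a b ha hb hab => ?_⟩
  calc ∑ i ∈ s, w i * f i (a • x + b • y)
      < ∑ i ∈ s, w i * (a * f i x + b * f i y) :=
        sum_lt_sum (fun i hi => mul_le_mul_of_nonneg_left
            ((hf i hi).convexOn.2 hx hy ha.le hb.le hab) (hw i hi))
          ⟨j, hj, mul_lt_mul_of_pos_left ((hf j hj).2 hx hy hxy ha hb hab) hwj⟩
    _ = a • ∑ i ∈ s, w i * f i x + b • ∑ i ∈ s, w i * f i y := by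
        simp only [smul_eq_mul, mul_sum, ← sum_add_distrib]
        exact sum_congr rfl fun i _ => by ring

end ConvexSum

section Epigraph

variable {V : Type*} [TopologicalSpace V] {F : V → ℝ}

theorem ContinuousOn.isOpen_strictEpigraph {U : Set V} (hF : ContinuousOn F U) (hU : IsOpen U) :
    IsOpen {p : V × ℝ | p.1 ∈ U ∧ F p.1 < p.2} := by
  have hcont : ContinuousOn (fun p : V × ℝ => F p.1 - p.2) (Prod.fst ⁻¹' U) :=
    (hF.comp continuousOn_fst fun _ hp => hp).sub continuousOn_snd
  convert hcont.isOpen_inter_preimage (hU.preimage continuous_fst) (isOpen_Iio (a := 0)) using 1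
  ext p
  simp

theorem lt_of_mem_interior_epigraph {K : Set V} {p : V × ℝ}
    (hp : p ∈ interior {q : V × ℝ | q.1 ∈ K ∧ F q.1 ≤ q.2}) : F p.1 < p.2 := by
  obtain ⟨y, t⟩ := p
  have hnhds : ∀ᶠ s in 𝓝 t, (y, s) ∈ {q : V × ℝ | q.1 ∈ K ∧ F q.1 ≤ q.2} :=
    (continuous_const.prodMk continuous_id).continuousAt.preimage_mem_nhds
      (mem_interior_iff_mem_nhds.1 hp)
  obtain ⟨s, hst, -, hs⟩ := hnhds.exists_lt
  exact hs.trans_lt hst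

end Epigraph

section SumRule

variable {V : Type*} [NormedAddCommGroup V] [NormedSpace ℝ V] {K : Set V} {x₀ : V}

theorem ContinuousLinearMap.eq_zero_of_forall_eq_of_interior_nonempty {L : V →L[ℝ] ℝ} {u : ℝ}
    (hK : (interior K).Nonempty) (hL : ∀ y ∈ K, L y = u) : L = 0 := by
  by_contra hL0
  have hopen := L.isOpenMap_of_ne_zero hL0 (interior K) isOpen_interior
  rw [(hK.image L).subset_singleton_iff.1
    (Set.image_subset_iff.2 fun y hy => hL y (interior_subset hy))] at hopen
  exact not_isOpen_singleton u hopen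

variable [FiniteDimensional ℝ V]

theorem ConvexOn.exists_affine_between {F H : V → ℝ} (hF : ConvexOn ℝ K F)
    (hH : ConcaveOn ℝ K H) (hK : (interior K).Nonempty) (hHF : ∀ y ∈ K, H y ≤ F y) :
    ∃ (L : V →L[ℝ] ℝ) (b : ℝ), ∀ y ∈ K, H y ≤ L y + b ∧ L y + b ≤ F y := by
  obtain ⟨z, hz⟩ := hK
  have hzK := interior_subset hz
  have hAB : Disjoint (interior {p : V × ℝ | p.1 ∈ K ∧ F p.1 ≤ p.2})
      {p : V × ℝ | p.1 ∈ K ∧ p.2 ≤ H p.1} := Set.disjoint_left.2 fun p hpA hpB =>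
    (lt_of_mem_interior_epigraph hpA).not_ge (hpB.2.trans (hHF p.1 hpB.1))
  have hAint : (interior {p : V × ℝ | p.1 ∈ K ∧ F p.1 ≤ p.2}).Nonempty := by
    refine ⟨(z, F z + 1), interior_maximal ?_
      (hF.continuousOn_interior.isOpen_strictEpigraph isOpen_interior) ⟨hz, lt_add_one _⟩⟩
    exact fun p hp => ⟨interior_subset hp.1, hp.2.le⟩
  obtain ⟨φ, u, hφ0, hφA, hφB⟩ := geometric_hahn_banach_of_nonempty_interior
    hF.convex_epigraph hH.convex_hypograph hAB hAint ⟨(z, H z), hzK, le_rfl⟩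
  set L := φ.comp (ContinuousLinearMap.inl ℝ V ℝ)
  set c := φ (0, 1)
  have hφ (y : V) (t : ℝ) : φ (y, t) = L y + t * c := by
    calc φ (y, t) = φ ((y, 0) + t • (0, 1)) := by simp
      _ = L y + t * c := by rw [map_add, map_smul, smul_eq_mul]; rfl
  have hA (y) (hy : y ∈ K) : L y + F y * c ≤ u := hφ y _ ▸ hφA _ ⟨hy, le_rfl⟩
  have hB (y) (hy : y ∈ K) : u ≤ L y + H y * c := hφ y _ ▸ hφB _ ⟨hy, le_rfl⟩
  -- the separating hyperplane is not vertical, since `K` has interior points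
  have hc : c < 0 := by
    refine lt_of_le_of_ne ?_ fun hc0 => hφ0 ?_
    · have := hφA (z, F z + 1) ⟨hzK, le_add_of_nonneg_right zero_le_one⟩
      rw [hφ] at this
      nlinarith [hA z hzK, hB z hzK, hHF z hzK]
    · have hL : L = 0 := ContinuousLinearMap.eq_zero_of_forall_eq_of_interior_nonempty ⟨z, hz⟩
        fun y hy => le_antisymm (by simpa [hc0] using hA y hy) (by simpa [hc0] using hB y hy)
      refine ContinuousLinearMap.ext fun p => ?_
      rw [← Prod.mk.eta (p := p), hφ, hL, hc0]
      simp
  refine ⟨-c⁻¹ • L, u / c, fun y hy => ?_⟩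
  have : (-c⁻¹ • L) y + u / c = (u - L y) / c := by
    simp only [smul_apply, smul_eq_mul, neg_mul]
    ring
  rw [this, le_div_iff_of_neg hc, div_le_iff_of_neg hc]
  constructor <;> linarith [hA y hy, hB y hy]

theorem exists_isSubgradientOn_add_of_interior_nonempty {F G : V → ℝ} {ℓ : Dual ℝ V}
    (hF : ConvexOn ℝ K F) (hG : ConvexOn ℝ K G) (hK : (interior K).Nonempty) (hx₀ : x₀ ∈ K)
    (hℓ : IsSubgradientOn K (fun y => F y + G y) x₀ ℓ) :
    ∃ m, IsSubgradientOn K F x₀ m ∧ IsSubgradientOn K G x₀ (ℓ - m) := by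
  obtain ⟨L, b, hLb⟩ := hF.exists_affine_between
    (((ℓ.concaveOn hF.1).add_const (F x₀ + G x₀ - ℓ x₀)).sub hG) hK fun y hy => by
      have := hℓ y hy
      simp only [Pi.sub_apply, Pi.add_apply, map_sub] at this ⊢
      linarith
  have hx₀L := hLb x₀ hx₀
  simp only [Pi.sub_apply, Pi.add_apply] at hLb hx₀L
  refine ⟨L, fun y hy => ?_, fun y hy => ?_⟩ <;>
  · simp only [LinearMap.sub_apply, ContinuousLinearMap.coe_coe, map_sub]
    linarith [hLb y hy, hℓ y hy]

theorem exists_isSubgradientOn_add {F G : V → ℝ} {ℓ : Dual ℝ V} (hF : ConvexOn ℝ K F)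
    (hG : ConvexOn ℝ K G) (hx₀ : x₀ ∈ K) (hℓ : IsSubgradientOn K (fun y => F y + G y) x₀ ℓ) :
    ∃ m, IsSubgradientOn K F x₀ m ∧ IsSubgradientOn K G x₀ (ℓ - m) := by
  have : Nonempty K := ⟨⟨x₀, hx₀⟩⟩
  set A := affineSpan ℝ K
  -- `φ` parametrises `A` by its direction, based at `x₀`; pulled back by `φ`, `K` has interior
  let φ : A.direction →ᵃ[ℝ] V :=
    A.subtype.comp (AffineEquiv.vaddConst ℝ (⟨x₀, subset_affineSpan ℝ K hx₀⟩ : A)).toAffineMap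
  have hφ (w : A.direction) : φ w = w + x₀ := rfl
  have hmem {y} (hy : y ∈ K) : y - x₀ ∈ A.direction :=
    AffineSubspace.vsub_mem_direction (subset_affineSpan ℝ K hy) (subset_affineSpan ℝ K hx₀)
  have hint : (interior (φ ⁻¹' K)).Nonempty := by
    rw [(hF.1.affine_preimage φ).interior_nonempty_iff_affineSpan_eq_top]
    show affineSpan ℝ ((AffineEquiv.vaddConst ℝ _) ⁻¹' (((↑) : A → V) ⁻¹' K)) = ⊤
    rw [← AffineSubspace.comap_span, affineSpan_coe_preimage_eq_top, AffineSubspace.comap_top]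
  obtain ⟨m, hFm, hGm⟩ := exists_isSubgradientOn_add_of_interior_nonempty
    (hF.comp_affineMap φ) (hG.comp_affineMap φ) hint (x₀ := 0) (by simpa [hφ])
    (ℓ := ℓ ∘ₗ A.direction.subtype) (fun w hw => by simpa [hφ] using hℓ _ hw)
  obtain ⟨m, rfl⟩ := LinearMap.exists_extend m
  refine ⟨m, fun y hy => ?_, fun y hy => ?_⟩
  · simpa [hφ] using hFm ⟨y - x₀, hmem hy⟩ (by simpa [hφ])
  · simpa [hφ] using hGm ⟨y - x₀, hmem hy⟩ (by simpa [hφ])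

theorem exists_isSubgradientOn_sum {ι : Type*} [DecidableEq ι] {S : Finset ι} (hS : S.Nonempty)
    {f : ι → V → ℝ} (hf : ∀ i ∈ S, ConvexOn ℝ K (f i)) (hx₀ : x₀ ∈ K) {ℓ : Dual ℝ V}
    (hℓ : IsSubgradientOn K (fun y => ∑ i ∈ S, f i y) x₀ ℓ) :
    ∃ m : ι → Dual ℝ V, (∀ i ∈ S, IsSubgradientOn K (f i) x₀ (m i)) ∧ ∑ i ∈ S, m i = ℓ := by
  induction hS using Finset.Nonempty.cons_induction generalizing ℓ with
  | singleton j => exact ⟨fun _ => ℓ, by simpa using hℓ, by simp⟩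
  | cons j S hj _ ih =>
    rw [forall_mem_cons] at hf
    obtain ⟨m, hm, hrest⟩ := exists_isSubgradientOn_add hf.1 (convexOn_sum hf.1.1 hf.2) hx₀
      (by simpa only [sum_cons] using hℓ)
    obtain ⟨μ, hμ, hμsum⟩ := ih hf.2 hrest
    have hne {i} (hi : i ∈ S) : i ≠ j := ne_of_mem_of_not_mem hi hj
    refine ⟨fun i => if i = j then m else μ i, ?_, ?_⟩
    · rw [forall_mem_cons]
      exact ⟨by simpa using hm, fun i hi => by simpa [hne hi] using hμ i hi⟩
    · rw [sum_cons, if_pos rfl, sum_congr rfl fun i hi => if_neg (hne hi), hμsum,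
        add_sub_cancel]

theorem exists_isSubgradientOn_sum_eq_zero {ι : Type*} [DecidableEq ι] {S : Finset ι}
    {f : ι → V → ℝ} (hf : ∀ i ∈ S, ConvexOn ℝ K (f i)) (hx₀ : x₀ ∈ K)
    (hmin : IsMinOn (fun y => ∑ i ∈ S, f i y) K x₀) :
    ∃ m : ι → Dual ℝ V, (∀ i ∈ S, IsSubgradientOn K (f i) x₀ (m i)) ∧ ∑ i ∈ S, m i = 0 := by
  obtain rfl | hS := S.eq_empty_or_nonempty
  · exact ⟨0, by simp, by simp⟩
  · exact exists_isSubgradientOn_sum hS hf hx₀ (isSubgradientOn_zero_iff.2 hmin)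

end SumRule

section Caratheodory

variable {ι E : Type*} [AddCommGroup E] [Module ℝ E] [FiniteDimensional ℝ E]

theorem exists_affine_dependence_of_finrank_succ_lt (v : ι → E) (c : ι → ℝ) {T : Finset ι}
    (hT : finrank ℝ E + 1 < #T) :
    ∃ μ : ι → ℝ, ∑ i ∈ T, μ i • v i = 0 ∧ ∑ i ∈ T, μ i = 0 ∧ (∃ i ∈ T, μ i ≠ 0) ∧
      0 ≤ ∑ i ∈ T, μ i * c i := by
  have hdep : ¬ LinearIndepOn ℝ (fun i => (v i, (1 : ℝ))) (T : Set ι) := fun h => by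
    have := h.fintype_card_le_finrank
    simp only [coe_sort_coe, Fintype.card_coe, finrank_prod, finrank_self] at this
    omega
  obtain ⟨μ, hμ, hμne⟩ := not_linearIndepOn_finset_iff.1 hdep
  have hv : ∑ i ∈ T, μ i • v i = 0 := by simpa [Prod.fst_sum] using congrArg Prod.fst hμ
  have h1 : ∑ i ∈ T, μ i = 0 := by simpa [Prod.snd_sum] using congrArg Prod.snd hμ
  rcases le_total 0 (∑ i ∈ T, μ i * c i) with hc | hc
  · exact ⟨μ, hv, h1, hμne, hc⟩
  · exact ⟨-μ, by simp [hv], by simp [h1], by simpa using hμne, by simpa using hc⟩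

variable [DecidableEq ι]

theorem exists_erase_weights_of_finrank_succ_lt (v : ι → E) (c : ι → ℝ) {T : Finset ι}
    (hT : finrank ℝ E + 1 < #T) {w : ι → ℝ} (hw : ∀ i ∈ T, 0 ≤ w i) :
    ∃ j ∈ T, ∃ α : ι → ℝ, (∀ i ∈ T.erase j, 0 ≤ α i) ∧
      ∑ i ∈ T.erase j, α i = ∑ i ∈ T, w i ∧
      ∑ i ∈ T.erase j, α i • v i = ∑ i ∈ T, w i • v i ∧
      ∑ i ∈ T.erase j, α i * c i ≤ ∑ i ∈ T, w i * c i := by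
  obtain ⟨μ, hμv, hμ1, hμne, hμc⟩ := exists_affine_dependence_of_finrank_succ_lt v c hT
  obtain ⟨j, hjP, hjmin⟩ := (T.filter (0 < μ ·)).exists_min_image (fun i => w i / μ i)
    (by simpa [Finset.Nonempty] using exists_pos_of_sum_zero_of_exists_nonzero μ hμ1 hμne)
  rw [mem_filter] at hjP
  -- the longest step along `-μ` keeping the weights nonnegative; it empties the weight at `j`
  set t := w j / μ j
  have ht : 0 ≤ t := div_nonneg (hw j hjP.1) hjP.2.le
  have hj0 : w j - t * μ j = 0 := by simp [t, div_mul_cancel₀ _ hjP.2.ne']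
  have hsumE : ∑ i ∈ T.erase j, (w i - t * μ i) • v i =
      ∑ i ∈ T, w i • v i - t • ∑ i ∈ T, μ i • v i := by
    rw [sum_erase _ (by simp [hj0]), smul_sum, ← sum_sub_distrib]
    simp only [sub_smul, mul_smul]
  have hsumR (x : ι → ℝ) : ∑ i ∈ T.erase j, (w i - t * μ i) * x i =
      ∑ i ∈ T, w i * x i - t * ∑ i ∈ T, μ i * x i := by
    rw [sum_erase _ (by simp [hj0]), mul_sum, ← sum_sub_distrib]
    simp only [sub_mul, mul_assoc]
  refine ⟨j, hjP.1, fun i => w i - t * μ i, fun i hi => ?_, ?_, ?_, ?_⟩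
  · have hiT := mem_of_mem_erase hi
    rcases lt_or_ge 0 (μ i) with hμi | hμi
    · have := hjmin i (mem_filter.2 ⟨hiT, hμi⟩)
      rw [le_div_iff₀ hμi] at this
      linarith
    · nlinarith [hw i hiT]
  · simpa [hμ1] using hsumR (fun _ => 1)
  · simp [hsumE, hμv]
  · rw [hsumR]
    nlinarith

theorem exists_subset_card_le_finrank_succ_weights (v : ι → E) (c : ι → ℝ) (T : Finset ι)
    {w : ι → ℝ} (hw : ∀ i ∈ T, 0 ≤ w i) :
    ∃ s ⊆ T, #s ≤ finrank ℝ E + 1 ∧ ∃ α : ι → ℝ, (∀ i, 0 ≤ α i) ∧ (∀ i ∉ s, α i = 0) ∧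
      ∑ i ∈ s, α i = ∑ i ∈ T, w i ∧ ∑ i ∈ s, α i • v i = ∑ i ∈ T, w i • v i ∧
      ∑ i ∈ s, α i * c i ≤ ∑ i ∈ T, w i * c i := by
  induction T using Finset.strongInduction generalizing w with
  | H T ih =>
    by_cases hT : #T ≤ finrank ℝ E + 1
    · refine ⟨T, subset_rfl, hT, fun i => if i ∈ T then w i else 0, fun i => ?_,
        fun i hi => if_neg hi, ?_, ?_, ?_⟩
      · dsimp only
        split_ifs with hi
        exacts [hw i hi, le_rfl]
      all_goals simp +contextual
    · obtain ⟨j, hj, α, hα, h1, hv, hc⟩ :=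
        exists_erase_weights_of_finrank_succ_lt v c (not_le.1 hT) hw
      obtain ⟨s, hs, hcard, β, hβ⟩ := ih _ (erase_ssubset hj) hα
      exact ⟨s, hs.trans (erase_subset j T), hcard, β, hβ.1, hβ.2.1, hβ.2.2.1.trans h1,
        hβ.2.2.2.1.trans hv, hβ.2.2.2.2.trans hc⟩

end Caratheodory

section SparseCombination

variable {V : Type*} [NormedAddCommGroup V] [NormedSpace ℝ V] [FiniteDimensional ℝ V]
  {K : Set V} {x₀ : V}

theorem exists_sparse_isMinOn_sum_mul {ι : Type*} [Fintype ι] [DecidableEq ι] {f : ι → V → ℝ}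
    (hf : ∀ i, ConvexOn ℝ K (f i)) {w : ι → ℝ} (hw : ∀ i, 0 ≤ w i) (hx₀ : x₀ ∈ K)
    (hmin : IsMinOn (fun y => ∑ i, w i * f i y) K x₀) :
    ∃ (s : Finset ι) (α : ι → ℝ), #s ≤ finrank ℝ V + 1 ∧ (∀ i, 0 ≤ α i) ∧ (∀ i ∉ s, α i = 0) ∧
      ∑ i, α i = ∑ i, w i ∧ IsMinOn (fun y => ∑ i, α i * f i y) K x₀ ∧
      ∑ i, α i * f i x₀ ≤ ∑ i, w i * f i x₀ := by
  set S := univ.filter (fun i => w i ≠ 0)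
  have hpos (i) (hi : i ∈ S) : 0 < w i := (hw i).lt_of_ne' (mem_filter.1 hi).2
  have hS (x : ι → ℝ) : ∑ i ∈ S, w i * x i = ∑ i, w i * x i :=
    sum_filter_of_ne fun i _ h => left_ne_zero_of_mul h
  obtain ⟨m, hm, hm0⟩ := exists_isSubgradientOn_sum_eq_zero (S := S)
    (f := fun i y => w i * f i y) (fun i _ => (hf i).smul (hw i)) hx₀
    (by simpa only [hS] using hmin)
  obtain ⟨s, hsS, hcard, α, hα0, hαs, hα1, hαv, hαc⟩ := exists_subset_card_le_finrank_succ_weights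
    (fun i => (w i)⁻¹ • m i) (fun i => f i x₀) S (fun i hi => (hpos i hi).le)
  have hsub {x : ι → ℝ} (hx : ∀ i ∉ s, x i = 0) : ∑ i ∈ s, x i = ∑ i, x i :=
    sum_subset (subset_univ s) fun i _ hi => hx i hi
  have hαv0 : ∑ i ∈ s, α i • ((w i)⁻¹ • m i) = 0 := by
    rw [hαv, ← hm0]
    exact sum_congr rfl fun i hi => by rw [smul_smul, mul_inv_cancel₀ (hpos i hi).ne', one_smul]
  have hαmin := isSubgradientOn_sum_mul (α := α) (hα := fun i _ => hα0 i)
    fun i hi => (isSubgradientOn_const_mul_iff (hpos i (hsS hi))).1 (hm i (hsS hi))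
  have hsubf (y : V) : ∑ i ∈ s, α i * f i y = ∑ i, α i * f i y :=
    hsub fun i hi => by simp [hαs i hi]
  refine ⟨s, α, by rwa [Subspace.dual_finrank_eq] at hcard, hα0, hαs, ?_, ?_, ?_⟩
  · rw [← hsub hαs, hα1, sum_filter_ne_zero]
  · simpa only [hαv0, isSubgradientOn_zero_iff, hsubf] using hαmin
  · rw [← hsubf, ← hS]
    exact hαc

end SparseCombination

theorem caratheodory_for_convex_functions_general
    (d n : ℕ) (K : Set (EuclideanSpace ℝ (Fin d)))
    (f : Fin n → EuclideanSpace ℝ (Fin d) → ℝ)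
    (hf : ∀ i, StrictConvexOn ℝ K (f i))
    (lam : Fin n → ℝ) (hlam : ∀ i, 0 ≤ lam i) (hlamsum : ∑ i, lam i = 1)
    (g : EuclideanSpace ℝ (Fin d) → ℝ) (hg : ∀ x, g x = ∑ i, lam i * f i x) :
    ∃ (s : Finset (Fin n)) (α : Fin n → ℝ),
      s.card ≤ d + 1 ∧ (∀ i, 0 ≤ α i) ∧ (∀ i ∉ s, α i = 0) ∧ (∑ i, α i = 1) ∧
      ∀ x ∈ K, IsMinOn g K x →
        (IsMinOn (fun y => ∑ i, α i * f i y) K x ∧ (∑ i, α i * f i x) ≤ g x) := by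
  obtain rfl : g = fun x => ∑ i, lam i * f i x := funext hg
  obtain ⟨j, -, hj⟩ := exists_lt_of_sum_lt (s := univ) (f := 0) (g := lam) (by simp [hlamsum])
  by_cases hmin : ∃ x₀ ∈ K, IsMinOn (fun x => ∑ i, lam i * f i x) K x₀
  · obtain ⟨x₀, hx₀, hx₀min⟩ := hmin
    obtain ⟨s, α, hcard, hα0, hαs, hα1, hαmin, hαle⟩ :=
      exists_sparse_isMinOn_sum_mul (fun i => (hf i).convexOn) hlam hx₀ hx₀min
    refine ⟨s, α, by simpa using hcard, hα0, hαs, hα1.trans hlamsum, fun x hx hxmin => ?_⟩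
    obtain rfl := (strictConvexOn_sum_mul (fun i _ => hf i) (fun i _ => hlam i)
      ⟨j, mem_univ j, hj⟩).eq_of_isMinOn hxmin hx₀min hx hx₀
    exact ⟨hαmin, hαle⟩
  · refine ⟨{j}, Pi.single j (1 : ℝ), by simp, fun i => ?_, fun i hi => ?_, by simp,
      fun x hx hxmin => absurd ⟨x, hx, hxmin⟩ hmin⟩
    · exact (Pi.single_nonneg.2 zero_le_one : (0 : Fin n → ℝ) ≤ Pi.single j 1) i
    · exact Pi.single_eq_of_ne (by simpa using hi) _

theorem caratheodory_for_convex_functions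
    (d n : ℕ) (K : Set (EuclideanSpace ℝ (Fin d)))
    (hKc : IsClosed K) (hKconv : Convex ℝ K)
    (f : Fin n → EuclideanSpace ℝ (Fin d) → ℝ)
    (hf : ∀ i, StrictConvexOn ℝ K (f i))
    (hattain : ∀ i, ∃ x ∈ K, ∀ y ∈ K, f i x ≤ f i y)
    (lam : Fin n → ℝ) (hlam : ∀ i, 0 ≤ lam i) (hlamsum : ∑ i, lam i = 1)
    (g : EuclideanSpace ℝ (Fin d) → ℝ) (hg : ∀ x, g x = ∑ i, lam i * f i x) :
    ∃ (s : Finset (Fin n)) (α : Fin n → ℝ),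
      s.card ≤ d + 1 ∧ (∀ i, 0 ≤ α i) ∧ (∀ i ∉ s, α i = 0) ∧ (∑ i, α i = 1) ∧
      ∀ x ∈ K, IsMinOn g K x →
        (IsMinOn (fun y => ∑ i, α i * f i y) K x ∧ (∑ i, α i * f i x) ≤ g x) :=
  caratheodory_for_convex_functions_general d n K f hf lam hlam hlamsum g hg
end

section
/- Let X be a finitely supported random vector in ℝ^d. Then there exists a random vector Y supported on at most d+1 points of the support of X such that E[Y] = E[X] and Var(Y) ≤ Var(X), where Var denotes E‖·−E[·]‖². -/
/-!
The variance `∑ q x * ‖x - μ‖²` is linear in the weights `q`, so it can be pushed down along any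
direction that preserves mass and barycentre. While the support has more than `d + 1` points it
carries an affine relation `∑ c x • x = 0`, `∑ c x = 0`; choosing its sign so that
`∑ c x * ‖x - μ‖² ≥ 0` and replacing `p` by `p - λ c` with the largest `λ` keeping the weights
nonnegative does not increase the variance and removes a point from the support.
-/

open Finset Module

namespace Caratheodory

variable {𝕜 : Type*} [Field 𝕜] [LinearOrder 𝕜] [IsStrictOrderedRing 𝕜]

theorem exists_nonneg_sub_mul_nonneg_and_eq_zero {ι : Type*} {s : Finset ι} {p c : ι → 𝕜}
    (hp : ∀ x ∈ s, 0 ≤ p x) (hc : ∃ x ∈ s, 0 < c x) :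
    ∃ a : 𝕜, 0 ≤ a ∧ (∀ x ∈ s, 0 ≤ p x - a * c x) ∧ ∃ x₀ ∈ s, p x₀ - a * c x₀ = 0 := by
  classical
  obtain ⟨x₀, hx₀, hmin⟩ := (s.filter (0 < c ·)).exists_min_image (fun x ↦ p x / c x)
    (by simpa [Finset.Nonempty] using hc)
  rw [mem_filter] at hx₀
  have ha := div_nonneg (hp x₀ hx₀.1) hx₀.2.le
  refine ⟨p x₀ / c x₀, ha, fun x hx ↦ ?_, x₀, hx₀.1, by field_simp [hx₀.2.ne']; ring⟩
  rcases le_or_gt (c x) 0 with hcx | hcx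
  · nlinarith [hp x hx]
  · have := hmin x (mem_filter.2 ⟨hx, hcx⟩)
    rw [le_div_iff₀ hcx] at this
    linarith

variable {E : Type*} [AddCommGroup E] [Module 𝕜 E] [FiniteDimensional 𝕜 E]

theorem exists_affine_relation_sum_mul_nonneg (f : E → 𝕜) {s : Finset E}
    (hs : finrank 𝕜 E + 1 < #s) :
    ∃ c : E → 𝕜, ∑ x ∈ s, c x • x = 0 ∧ ∑ x ∈ s, c x = 0 ∧
      0 ≤ ∑ x ∈ s, c x * f x ∧ ∃ x ∈ s, 0 < c x := by
  obtain ⟨c, hcvec, hcsum, x₁, hx₁, hcx₁⟩ :=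
    exists_nontrivial_relation_sum_zero_of_finrank_succ_lt_card (R := 𝕜) hs
  wlog hcf : 0 ≤ ∑ x ∈ s, c x * f x generalizing c
  · refine this (-c) (by simp [hcvec]) (by simp [hcsum]) (by simpa using hcx₁) ?_
    simp only [Pi.neg_apply, neg_mul, sum_neg_distrib]
    linarith
  refine ⟨c, hcvec, hcsum, hcf, ?_⟩
  by_contra! hc
  exact hcx₁ ((sum_eq_zero_iff_of_nonpos hc).1 hcsum x₁ hx₁)

theorem exists_reweight_eq_zero_of_finrank_succ_lt_card (f : E → 𝕜) {s : Finset E}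
    (hs : finrank 𝕜 E + 1 < #s) {p : E → 𝕜} (hp : ∀ x ∈ s, 0 ≤ p x) :
    ∃ p' : E → 𝕜, (∀ x ∈ s, 0 ≤ p' x) ∧ (∃ x₀ ∈ s, p' x₀ = 0) ∧
      ∑ x ∈ s, p' x = ∑ x ∈ s, p x ∧ ∑ x ∈ s, p' x • x = ∑ x ∈ s, p x • x ∧
      ∑ x ∈ s, p' x * f x ≤ ∑ x ∈ s, p x * f x := by
  obtain ⟨c, hcvec, hcsum, hcf, hcpos⟩ := exists_affine_relation_sum_mul_nonneg f hs
  obtain ⟨a, ha, hnonneg, hzero⟩ := exists_nonneg_sub_mul_nonneg_and_eq_zero hp hcpos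
  refine ⟨fun x ↦ p x - a * c x, hnonneg, hzero, ?_, ?_, ?_⟩
  · simp [sum_sub_distrib, ← mul_sum, hcsum]
  · simp [sub_smul, sum_sub_distrib, mul_smul, ← smul_sum, hcvec]
  · simp only [sub_mul, sum_sub_distrib, mul_assoc, ← mul_sum]
    linarith [mul_nonneg ha hcf]

theorem exists_subset_card_le_finrank_succ_reweight (f : E → 𝕜) (s : Finset E) (p : E → 𝕜)
    (hp : ∀ x ∈ s, 0 ≤ p x) :
    ∃ t ⊆ s, ∃ q : E → 𝕜, #t ≤ finrank 𝕜 E + 1 ∧ (∀ x ∈ t, 0 ≤ q x) ∧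
      ∑ x ∈ t, q x = ∑ x ∈ s, p x ∧ ∑ x ∈ t, q x • x = ∑ x ∈ s, p x • x ∧
      ∑ x ∈ t, q x * f x ≤ ∑ x ∈ s, p x * f x := by
  classical
  induction s using Finset.strongInduction generalizing p with
  | H s ih =>
    by_cases hs : #s ≤ finrank 𝕜 E + 1
    · exact ⟨s, subset_rfl, p, hs, hp, rfl, rfl, le_rfl⟩
    obtain ⟨p', hp', ⟨x₀, hx₀, hpx₀⟩, hsum, hmean, hf⟩ :=
      exists_reweight_eq_zero_of_finrank_succ_lt_card f (not_le.1 hs) hp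
    obtain ⟨t, hts, q, hcard, hq, hqsum, hqmean, hqf⟩ :=
      ih _ (erase_ssubset hx₀) p' fun x hx ↦ hp' x (mem_of_mem_erase hx)
    rw [sum_erase _ hpx₀] at hqsum
    rw [sum_erase _ (by simp [hpx₀])] at hqmean hqf
    exact ⟨t, hts.trans (erase_subset _ _), q, hcard, hq, hqsum.trans hsum, hqmean.trans hmean,
      hqf.trans hf⟩

theorem exists_subset_support_card_le_finrank_succ_reweight (f : E → 𝕜) (s : Finset E)
    (p : E → 𝕜) (hp : ∀ x ∈ s, 0 ≤ p x) :
    ∃ t ⊆ s, (∀ x ∈ t, 0 < p x) ∧ ∃ q : E → 𝕜, #t ≤ finrank 𝕜 E + 1 ∧ (∀ x ∈ t, 0 ≤ q x) ∧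
      ∑ x ∈ t, q x = ∑ x ∈ s, p x ∧ ∑ x ∈ t, q x • x = ∑ x ∈ s, p x • x ∧
      ∑ x ∈ t, q x * f x ≤ ∑ x ∈ s, p x * f x := by
  classical
  obtain ⟨t, hts, q, hcard, hq, hqsum, hqmean, hqf⟩ :=
    exists_subset_card_le_finrank_succ_reweight f (s.filter (0 < p ·)) p
      fun x hx ↦ hp x (mem_filter.1 hx).1
  have hpos : ∀ x ∈ s, p x ≠ 0 → 0 < p x := fun x hx h ↦ (hp x hx).lt_of_ne' h
  rw [sum_filter_of_ne fun x hx h ↦ hpos x hx h] at hqsum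
  rw [sum_filter_of_ne fun x hx h ↦ hpos x hx (left_ne_zero_of_smul h)] at hqmean
  rw [sum_filter_of_ne fun x hx h ↦ hpos x hx (left_ne_zero_of_mul h)] at hqf
  exact ⟨t, hts.trans (filter_subset _ _), fun x hx ↦ (mem_filter.1 (hts hx)).2, q, hcard, hq,
    hqsum, hqmean, hqf⟩

end Caratheodory

theorem caratheodory_mean_variance
    (d : ℕ) (s : Finset (EuclideanSpace ℝ (Fin d)))
    (p : EuclideanSpace ℝ (Fin d) → ℝ) (hp : ∀ x ∈ s, 0 ≤ p x)
    (hsum : ∑ x ∈ s, p x = 1) :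
    ∃ (t : Finset (EuclideanSpace ℝ (Fin d))) (q : EuclideanSpace ℝ (Fin d) → ℝ),
      t ⊆ s ∧ (∀ x ∈ t, 0 < p x) ∧ t.card ≤ d + 1 ∧
      (∀ x ∈ t, 0 ≤ q x) ∧ (∑ x ∈ t, q x = 1) ∧
      (∑ x ∈ t, q x • x = ∑ x ∈ s, p x • x) ∧
      (∑ x ∈ t, q x * ‖x - ∑ y ∈ s, p y • y‖^2 ≤
        ∑ x ∈ s, p x * ‖x - ∑ y ∈ s, p y • y‖^2) := by
  obtain ⟨t, hts, hpt, q, hcard, hq, hqsum, hqmean, hqvar⟩ :=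
    Caratheodory.exists_subset_support_card_le_finrank_succ_reweight
      (fun x ↦ ‖x - ∑ y ∈ s, p y • y‖ ^ 2) s p hp
  rw [finrank_euclideanSpace_fin] at hcard
  exact ⟨t, q, hts, hpt, hcard, hq, hqsum.trans hsum, hqmean, hqvar⟩
end

section
/- Let D = {(eᵢ,2)}ᵢ ∪ {(−eᵢ,1)}ᵢ ⊆ ℝ^d × ℝ as above, and let D' ⊊ D be any proper subset. Let w' be the minimum-norm minimizer of the empirical squared loss over D'. Then L_D(w') > L_D(w⋆) = 9/4, i.e., no proper subset (in particular none of size < 2d) allows the min-norm ERM to match the optimal loss on D. -/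
/-!
On the full dataset the loss separates over coordinates: coordinate `k` contributes
`(w k - 2)^2 + (w k + 1)^2 = 2 (w k - 1/2)^2 + 9/2`, so `L w > 9/4` as soon as some `w k ≠ 1/2`.
The loss on `S` separates in the same way, and so does the squared Euclidean norm, hence a
min-norm minimizer is coordinatewise a min-norm minimizer. At a coordinate where `S` misses a
data point, the restricted loss is `(t - 2)^2`, `(t + 1)^2` or `0`, whose min-norm minimizers are
`2`, `-1` and `0`: never `1/2`.
-/

open Finset

def IsMinNormMinimizer {E β : Type*} [Norm E] [Preorder β] (f : E → β) (x : E) : Prop :=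
  IsMinOn f Set.univ x ∧ ∀ y, IsMinOn f Set.univ y → ‖x‖ ≤ ‖y‖

theorem isMinNormMinimizer_const_mul_iff {E : Type*} [Norm E] {f : E → ℝ} {x : E} {c : ℝ}
    (hc : 0 < c) : IsMinNormMinimizer (fun y => c * f y) x ↔ IsMinNormMinimizer f x := by
  have key : ∀ z, IsMinOn (fun y => c * f y) Set.univ z ↔ IsMinOn f Set.univ z := fun z => by
    simp only [isMinOn_iff, mul_le_mul_iff_right₀ hc]
  simp only [IsMinNormMinimizer, key]

theorem Finset.sum_apply_update_eq {ι M : Type*} [Fintype ι] [DecidableEq ι] [AddCommGroup M]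
    {α : ι → Type*} (g : ∀ i, α i → M) (w : ∀ i, α i) (j : ι) (t : α j) :
    ∑ i, g i (Function.update w j t i) = ∑ i, g i (w i) - g j (w j) + g j t := by
  simp only [Function.apply_update g, sum_update_of_mem (mem_univ j),
    sum_eq_add_sum_sdiff_singleton_of_mem (mem_univ j) (fun i => g i (w i))]
  abel

section

variable {ι : Type*} [DecidableEq ι]

theorem IsMinNormMinimizer.apply_of_eq_sum [Fintype ι] {F : EuclideanSpace ℝ ι → ℝ}
    {g : ι → ℝ → ℝ} (hF : ∀ w, F w = ∑ i, g i (w i)) {w : EuclideanSpace ℝ ι}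
    (hw : IsMinNormMinimizer F w) (j : ι) : IsMinNormMinimizer (g j) (w j) := by
  set upd : ℝ → EuclideanSpace ℝ ι := fun t => WithLp.toLp 2 (Function.update w.ofLp j t)
  have hF_upd (t : ℝ) : F (upd t) = F w - g j (w j) + g j t := by
    simp only [hF, upd, sum_apply_update_eq]
  have hnorm_upd (t : ℝ) : ‖upd t‖ ^ 2 = ‖w‖ ^ 2 - w j ^ 2 + t ^ 2 := by
    simp only [EuclideanSpace.real_norm_sq_eq, upd, sum_apply_update_eq (fun _ x => x ^ 2)]
  obtain ⟨hmin, hmin_norm⟩ := hw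
  rw [isMinOn_iff] at hmin
  refine ⟨isMinOn_iff.2 fun t _ => ?_, fun t ht => ?_⟩
  · linarith [hmin (upd t) trivial, hF_upd t]
  · have ht' := isMinOn_iff.1 ht (w j) trivial
    have hupd : IsMinOn F Set.univ (upd t) :=
      isMinOn_iff.2 fun v _ => by linarith [hmin v trivial, hF_upd t]
    have := pow_le_pow_left₀ (norm_nonneg w) (hmin_norm _ hupd) 2
    rw [Real.norm_eq_abs, Real.norm_eq_abs, ← sq_le_sq]
    linarith [hnorm_upd t]

def basisCoordLoss (S : Finset (ι ⊕ ι)) (k : ι) (t : ℝ) : ℝ :=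
  (if Sum.inl k ∈ S then (t - 2) ^ 2 else 0) + (if Sum.inr k ∈ S then (t + 1) ^ 2 else 0)

theorem sum_sq_residual_eq_sum_basisCoordLoss [Fintype ι] {X : ι ⊕ ι → EuclideanSpace ℝ ι}
    {Y : ι ⊕ ι → ℝ}
    (hX : ∀ i, X (Sum.inl i) = EuclideanSpace.single i (1 : ℝ) ∧
      X (Sum.inr i) = -EuclideanSpace.single i (1 : ℝ))
    (hY : ∀ i, Y (Sum.inl i) = 2 ∧ Y (Sum.inr i) = 1)
    (S : Finset (ι ⊕ ι)) (w : EuclideanSpace ℝ ι) :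
    ∑ i ∈ S, (inner ℝ w (X i) - Y i) ^ 2 = ∑ k, basisCoordLoss S k (w k) := by
  conv_lhs => rw [← univ_inter S, ← sum_ite_mem, Fintype.sum_sum_type, ← sum_add_distrib]
  refine sum_congr rfl fun k _ => ?_
  simp only [basisCoordLoss, (hX k).1, (hX k).2, (hY k).1, (hY k).2, inner_neg_right,
    EuclideanSpace.inner_single_right]
  simp only [one_mul, conj_trivial]
  split_ifs <;> ring

-- For `S = ∅` the junk value `0⁻¹ = 0` is harmless: both sides vanish.
theorem exists_pos_inv_card_mul_sum_basisCoordLoss [Fintype ι] (S : Finset (ι ⊕ ι)) :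
    ∃ c > 0, ∀ w : EuclideanSpace ℝ ι,
      (#S : ℝ)⁻¹ * ∑ k, basisCoordLoss S k (w k) = c * ∑ k, basisCoordLoss S k (w k) := by
  rcases S.eq_empty_or_nonempty with rfl | hS
  · exact ⟨1, one_pos, fun w => by simp [basisCoordLoss]⟩
  · exact ⟨_, by positivity, fun _ => rfl⟩

theorem basisCoordLoss_univ [Fintype ι] (k : ι) (t : ℝ) :
    basisCoordLoss univ k t = 2 * (t - 1 / 2) ^ 2 + 9 / 2 := by
  simp only [basisCoordLoss, mem_univ, if_true]
  ring

theorem not_isMinNormMinimizer_basisCoordLoss_half {S : Finset (ι ⊕ ι)} {k : ι}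
    (hk : Sum.inl k ∉ S ∨ Sum.inr k ∉ S) :
    ¬ IsMinNormMinimizer (basisCoordLoss S k) (1 / 2) := by
  rintro ⟨hmin, hmin_norm⟩
  rw [isMinOn_iff] at hmin
  by_cases hl : Sum.inl k ∈ S <;> by_cases hr : Sum.inr k ∈ S
  · tauto
  · have := hmin 2 trivial
    simp only [basisCoordLoss, hl, hr, if_true, if_false] at this
    norm_num at this
  · have := hmin (-1) trivial
    simp only [basisCoordLoss, hl, hr, if_true, if_false] at this
    norm_num at this
  · have := hmin_norm 0 (isMinOn_iff.2 fun _ _ => by simp [basisCoordLoss, hl, hr])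
    norm_num at this

theorem nine_fourths_lt_mean_basisCoordLoss_univ [Fintype ι] (w : EuclideanSpace ℝ ι) {j : ι}
    (hj : w j ≠ 1 / 2) :
    9 / 4 < 1 / (2 * Fintype.card ι) * ∑ k, basisCoordLoss univ k (w k) := by
  have hs : 0 < ∑ k, (w k - 1 / 2) ^ 2 :=
    sum_pos' (fun _ _ => sq_nonneg _) ⟨j, mem_univ j, by positivity [sub_ne_zero.2 hj]⟩
  have hn : (0 : ℝ) < Fintype.card ι := by exact_mod_cast Fintype.card_pos_iff.2 ⟨j⟩
  simp only [basisCoordLoss_univ, sum_add_distrib, ← mul_sum, sum_const, card_univ, nsmul_eq_mul]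
  rw [one_div, ← div_eq_inv_mul, lt_div_iff₀ (by positivity)]
  linarith

end

theorem basis_dataset_no_proper_subset_general
    (d : ℕ)
    (X : Fin d ⊕ Fin d → EuclideanSpace ℝ (Fin d))
    (Y : Fin d ⊕ Fin d → ℝ)
    (hX : ∀ i, X (Sum.inl i) = EuclideanSpace.single i (1:ℝ) ∧
               X (Sum.inr i) = -EuclideanSpace.single i (1:ℝ))
    (hY : ∀ i, Y (Sum.inl i) = 2 ∧ Y (Sum.inr i) = 1)
    (L : EuclideanSpace ℝ (Fin d) → ℝ)
    (hL : ∀ w, L w = (1 / (2*(d:ℝ))) * ∑ i, ((inner ℝ w (X i) : ℝ) - Y i)^2)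
    (S : Finset (Fin d ⊕ Fin d)) (hS : S ≠ Finset.univ)
    (LS : EuclideanSpace ℝ (Fin d) → ℝ)
    (hLS : ∀ w, LS w = ((S.card : ℝ))⁻¹ * ∑ i ∈ S, ((inner ℝ w (X i) : ℝ) - Y i)^2)
    (w' : EuclideanSpace ℝ (Fin d))
    (hmin : IsMinOn LS Set.univ w')
    (hnorm : ∀ w, IsMinOn LS Set.univ w → ‖w'‖ ≤ ‖w‖) :
    9/4 < L w' := by
  have hres := sum_sq_residual_eq_sum_basisCoordLoss hX hY
  obtain ⟨c, hc, hLS_eq⟩ := exists_pos_inv_card_mul_sum_basisCoordLoss (ι := Fin d) S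
  have hLS_fun : LS = fun w => c * ∑ k, basisCoordLoss S k (w k) :=
    funext fun w => by rw [hLS, hres, hLS_eq]
  have hw' : IsMinNormMinimizer (fun w : EuclideanSpace ℝ (Fin d) =>
      ∑ k, basisCoordLoss S k (w k)) w' :=
    (isMinNormMinimizer_const_mul_iff hc).1 (hLS_fun ▸ ⟨hmin, hnorm⟩)
  obtain ⟨a, ha⟩ := not_forall.1 (mt eq_univ_of_forall hS)
  obtain ⟨j, hj⟩ : ∃ j, Sum.inl j ∉ S ∨ Sum.inr j ∉ S := by
    rcases a with j | j <;> exact ⟨j, by tauto⟩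
  have hw'j : w' j ≠ 1 / 2 := fun h =>
    not_isMinNormMinimizer_basisCoordLoss_half hj (h ▸ hw'.apply_of_eq_sum (fun _ => rfl) j)
  rw [hL, hres]
  simpa using nine_fourths_lt_mean_basisCoordLoss_univ w' hw'j

theorem basis_dataset_no_proper_subset
    (d : ℕ) (hd : 1 ≤ d)
    (X : Fin d ⊕ Fin d → EuclideanSpace ℝ (Fin d))
    (Y : Fin d ⊕ Fin d → ℝ)
    (hX : ∀ i, X (Sum.inl i) = EuclideanSpace.single i (1:ℝ) ∧
               X (Sum.inr i) = -EuclideanSpace.single i (1:ℝ))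
    (hY : ∀ i, Y (Sum.inl i) = 2 ∧ Y (Sum.inr i) = 1)
    (L : EuclideanSpace ℝ (Fin d) → ℝ)
    (hL : ∀ w, L w = (1 / (2*(d:ℝ))) * ∑ i, ((inner ℝ w (X i) : ℝ) - Y i)^2)
    (S : Finset (Fin d ⊕ Fin d)) (hS : S ≠ Finset.univ)
    (LS : EuclideanSpace ℝ (Fin d) → ℝ)
    (hLS : ∀ w, LS w = ((S.card : ℝ))⁻¹ * ∑ i ∈ S, ((inner ℝ w (X i) : ℝ) - Y i)^2)
    (w' : EuclideanSpace ℝ (Fin d))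
    (hmin : IsMinOn LS Set.univ w')
    (hnorm : ∀ w, IsMinOn LS Set.univ w → ‖w'‖ ≤ ‖w‖) :
    9/4 < L w' :=
  basis_dataset_no_proper_subset_general d X Y hX hY L hL S hS LS hLS w' hmin hnorm
end

section
/- For every n, d ≥ 1 and every finite nonempty multiset D ⊆ ℝ^d with L_D^⋆ > 0, there exist n points z₁,…,z_n ∈ D such that L_D((z₁+⋯+z_n)/n) ≤ ((n+1)/n) · L_D^⋆. -/
/-!
Write `V` for the mean squared distance of the points of `D` to their mean `μ`. For every
`a`, the mean squared distance from `a` to `D` is `‖a - μ‖² + V`, since the cross term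
averages to zero. Applied at `a = μ - S`, this gives a point `w ∈ D` with
`‖(w - μ) + S‖² ≤ ‖S‖² + V`, so `n` points can be chosen greedily with
`‖∑ (zᵢ - μ)‖² ≤ n V`. This derandomises the fact that an average of `n` independent uniform
draws from `D` has variance `V / n`. Dividing by `n²` and applying the decomposition once
more yields `L(z̄) ≤ V / n + V`.
-/

open Multiset

namespace Multiset

variable {E : Type*} [NormedAddCommGroup E] [InnerProductSpace ℝ E]

noncomputable def meanSqDist (D : Multiset E) (a : E) : ℝ :=
  (D.map fun z => ‖a - z‖ ^ 2).sum / card D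

lemma exists_le_sum_map_div_card {α : Type*} {D : Multiset α} (hD : D ≠ 0) (f : α → ℝ) :
    ∃ z ∈ D, f z ≤ (D.map f).sum / card D := by
  by_contra! h
  have hcard : (card D : ℝ) ≠ 0 := by exact_mod_cast (card_pos.2 hD).ne'
  have hlt := sum_lt_sum_of_nonempty hD h
  rw [map_const', sum_replicate, nsmul_eq_mul, mul_div_cancel₀ _ hcard] at hlt
  exact lt_irrefl _ hlt

lemma sum_map_inner_sub_eq_zero {D : Multiset E} {μ : E} (hμ : (card D : ℝ) • μ = D.sum)
    (v : E) : (D.map fun z => inner ℝ v (μ - z)).sum = 0 := by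
  have hcomm : (D.map fun z => inner ℝ v (μ - z)).sum
      = inner ℝ v (D.map fun z => μ - z).sum := by
    simpa [map_map, Function.comp_def] using
      (map_multiset_sum (innerSL ℝ v) (D.map fun z => μ - z)).symm
  rw [hcomm, sum_map_sub, map_const', sum_replicate, ← Nat.cast_smul_eq_nsmul ℝ, hμ, map_id',
    sub_self, inner_zero_right]

lemma meanSqDist_eq_norm_sub_sq_add {D : Multiset E} (hD : D ≠ 0) {μ : E}
    (hμ : (card D : ℝ) • μ = D.sum) (a : E) :
    D.meanSqDist a = ‖a - μ‖ ^ 2 + D.meanSqDist μ := by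
  have hcard : (card D : ℝ) ≠ 0 := by exact_mod_cast (card_pos.2 hD).ne'
  have hsplit : D.map (fun z => ‖a - z‖ ^ 2)
      = D.map fun z => ‖a - μ‖ ^ 2 + 2 * inner ℝ (a - μ) (μ - z) + ‖μ - z‖ ^ 2 :=
    map_congr rfl fun z _ => by rw [← norm_add_sq_real, sub_add_sub_cancel]
  rw [meanSqDist, meanSqDist, hsplit, sum_map_add, sum_map_add, sum_map_mul_left,
    sum_map_inner_sub_eq_zero hμ, map_const', sum_replicate, nsmul_eq_mul]
  field_simp
  ring

lemma exists_mem_norm_add_sub_sq_le {D : Multiset E} (hD : D ≠ 0) {μ : E}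
    (hμ : (card D : ℝ) • μ = D.sum) (S : E) :
    ∃ w ∈ D, ‖(w - μ) + S‖ ^ 2 ≤ ‖S‖ ^ 2 + D.meanSqDist μ := by
  obtain ⟨w, hw, hle⟩ := exists_le_sum_map_div_card hD fun z => ‖(μ - S) - z‖ ^ 2
  refine ⟨w, hw, ?_⟩
  have hmean := meanSqDist_eq_norm_sub_sq_add hD hμ (μ - S)
  rw [meanSqDist, sub_sub_cancel_left, norm_neg] at hmean
  rwa [← hmean, ← norm_neg, show -((w - μ) + S) = (μ - S) - w by abel]

lemma exists_norm_sum_sub_sq_le {D : Multiset E} (hD : D ≠ 0) {μ : E}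
    (hμ : (card D : ℝ) • μ = D.sum) (n : ℕ) :
    ∃ z : Fin n → E, (∀ i, z i ∈ D) ∧ ‖∑ i, (z i - μ)‖ ^ 2 ≤ n * D.meanSqDist μ := by
  induction n with
  | zero => exact ⟨Fin.elim0, fun i => i.elim0, by simp⟩
  | succ n ih =>
    obtain ⟨z, hz, hle⟩ := ih
    obtain ⟨w, hw, hstep⟩ := exists_mem_norm_add_sub_sq_le hD hμ (∑ i, (z i - μ))
    refine ⟨Fin.cons w z, Fin.forall_fin_succ.2 ⟨hw, hz⟩, ?_⟩
    rw [Fin.sum_univ_succ]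
    simp only [Fin.cons_zero, Fin.cons_succ]
    push_cast
    linarith

lemma exists_norm_average_sub_sq_le {D : Multiset E} (hD : D ≠ 0) {μ : E}
    (hμ : (card D : ℝ) • μ = D.sum) {n : ℕ} (hn : n ≠ 0) :
    ∃ z : Fin n → E, (∀ i, z i ∈ D) ∧
      ‖(n : ℝ)⁻¹ • ∑ i, z i - μ‖ ^ 2 ≤ D.meanSqDist μ / n := by
  obtain ⟨z, hz, hle⟩ := exists_norm_sum_sub_sq_le hD hμ n
  refine ⟨z, hz, ?_⟩
  have hnR : (n : ℝ) ≠ 0 := by exact_mod_cast hn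
  have hcentre : (n : ℝ)⁻¹ • ∑ i, z i - μ = (n : ℝ)⁻¹ • ∑ i, (z i - μ) := by
    rw [Finset.sum_sub_distrib, Finset.sum_const, Finset.card_univ, Fintype.card_fin,
      smul_sub, ← Nat.cast_smul_eq_nsmul ℝ, inv_smul_smul₀ hnR]
  rw [hcentre, norm_smul, mul_pow, norm_inv, Real.norm_natCast, inv_pow,
    inv_mul_le_iff₀ (by positivity)]
  calc ‖∑ i, (z i - μ)‖ ^ 2 ≤ n * D.meanSqDist μ := hle
    _ = (n : ℝ) ^ 2 * (D.meanSqDist μ / n) := by field_simp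

end Multiset

theorem mean_estimation_upper_bound_highdim_general
    (n d : ℕ) (hn : 1 ≤ n)
    (D : Multiset (EuclideanSpace ℝ (Fin d))) (hD : D ≠ 0)
    (L : EuclideanSpace ℝ (Fin d) → ℝ)
    (hL : ∀ h, L h = (D.map (fun z => ‖h - z‖^2)).sum / D.card)
    (μ : EuclideanSpace ℝ (Fin d)) (hμ : μ = (D.card : ℝ)⁻¹ • D.sum) :
    ∃ z : Fin n → EuclideanSpace ℝ (Fin d), (∀ i, z i ∈ D) ∧
      L ((n : ℝ)⁻¹ • ∑ i, z i) ≤ (((n : ℝ) + 1) / n) * L μ := by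
  have hL : L = D.meanSqDist := funext hL
  have hcard : (card D : ℝ) ≠ 0 := by exact_mod_cast (card_pos.2 hD).ne'
  have hμ : (card D : ℝ) • μ = D.sum := by rw [hμ, smul_inv_smul₀ hcard]
  have hnR : (n : ℝ) ≠ 0 := by positivity
  obtain ⟨z, hz, hle⟩ := exists_norm_average_sub_sq_le hD hμ (n := n) (by omega)
  refine ⟨z, hz, ?_⟩
  rw [hL, meanSqDist_eq_norm_sub_sq_add hD hμ]
  calc ‖(n : ℝ)⁻¹ • ∑ i, z i - μ‖ ^ 2 + D.meanSqDist μ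
      ≤ D.meanSqDist μ / n + D.meanSqDist μ := by gcongr
    _ = ((n : ℝ) + 1) / n * D.meanSqDist μ := by field_simp; ring

theorem mean_estimation_upper_bound_highdim
    (n d : ℕ) (hn : 1 ≤ n) (hd : 1 ≤ d)
    (D : Multiset (EuclideanSpace ℝ (Fin d))) (hD : D ≠ 0)
    (L : EuclideanSpace ℝ (Fin d) → ℝ)
    (hL : ∀ h, L h = (D.map (fun z => ‖h - z‖^2)).sum / D.card)
    (μ : EuclideanSpace ℝ (Fin d)) (hμ : μ = (D.card : ℝ)⁻¹ • D.sum)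
    (hmin : ∀ h, L μ ≤ L h)
    (hpos : 0 < L μ) :
    ∃ z : Fin n → EuclideanSpace ℝ (Fin d), (∀ i, z i ∈ D) ∧
      L ((n : ℝ)⁻¹ • ∑ i, z i) ≤ (((n : ℝ) + 1) / n) * L μ :=
  mean_estimation_upper_bound_highdim_general n d hn D hD L hL μ hμ
end

section
/- Fix n ≥ 1. For d > n, let D_d = {e₁,…,e_d} ⊆ ℝ^d be the standard basis vectors. Then L_{D_d}^⋆ = (d−1)/d, and the minimum over all choices of n points from D_d of L_{D_d}(average of the n points) equals L_{D_d}^⋆ + 1/n − 1/d. Consequently, lim_{d→∞} L_{D_d}^⋆(n)/L_{D_d}^⋆ = (n+1)/n. -/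
/-!
The mean-squared distance to a finite point set splits as the squared distance to its mean plus
its variance. For an orthonormal family of `d` vectors the variance is `(d - 1) / d`, and the mean
`μ` has `⟪v i, μ⟫ = ‖μ‖² = 1 / d`, so an average `a` of `n` members of the family satisfies
`‖a - μ‖² = ‖a‖² - 1 / d`. Expanding `‖a‖²` as a double sum of inner products, the diagonal alone
contributes `1 / n`, and nothing else when the `n` members are distinct.
-/

open Filter Topology

section Mean

variable {ι κ E : Type*} [NormedAddCommGroup E] [InnerProductSpace ℝ E]

noncomputable def mean [Fintype ι] (x : ι → E) : E := (Fintype.card ι : ℝ)⁻¹ • ∑ i, x i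

theorem inner_mean_left [Fintype ι] (x : ι → E) (y : E) :
    inner ℝ (mean x) y = (Fintype.card ι : ℝ)⁻¹ * ∑ i, inner ℝ (x i) y := by
  rw [mean, real_inner_smul_left, sum_inner]

theorem sum_sub_mean [Fintype ι] [Nonempty ι] (x : ι → E) : ∑ i, (x i - mean x) = 0 := by
  have hcard : (Fintype.card ι : ℝ) ≠ 0 := by positivity
  rw [Finset.sum_sub_distrib, Finset.sum_const, Finset.card_univ, mean,
    ← Nat.cast_smul_eq_nsmul ℝ, smul_smul, mul_inv_cancel₀ hcard, one_smul, sub_self]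

theorem sum_norm_sub_sq_eq_card_mul_add [Fintype ι] [Nonempty ι] (x : ι → E) (h : E) :
    ∑ i, ‖h - x i‖ ^ 2 =
      Fintype.card ι * ‖h - mean x‖ ^ 2 + ∑ i, ‖x i - mean x‖ ^ 2 := by
  have hsplit : ∀ i, ‖h - x i‖ ^ 2 =
      ‖h - mean x‖ ^ 2 - 2 * inner ℝ (h - mean x) (x i - mean x) + ‖x i - mean x‖ ^ 2 := by
    intro i
    rw [← norm_sub_sq_real, sub_sub_sub_cancel_right]
  have hcross : ∑ i, inner ℝ (h - mean x) (x i - mean x) = 0 := by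
    rw [← inner_sum, sum_sub_mean, inner_zero_right]
  simp only [hsplit, Finset.sum_add_distrib, Finset.sum_sub_distrib, ← Finset.mul_sum, hcross,
    Finset.sum_const, Finset.card_univ, nsmul_eq_mul]
  ring

namespace Orthonormal

variable {v : ι → E}

theorem inner_mean [Fintype ι] (hv : Orthonormal ℝ v) (i : ι) :
    inner ℝ (v i) (mean v) = (Fintype.card ι : ℝ)⁻¹ := by
  classical
  simp [mean, inner_smul_right, inner_sum, orthonormal_iff_ite.mp hv]

theorem norm_mean_sq [Fintype ι] (hv : Orthonormal ℝ v) :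
    ‖mean v‖ ^ 2 = (Fintype.card ι : ℝ)⁻¹ := by
  rw [← real_inner_self_eq_norm_sq, inner_mean_left]
  rcases eq_or_ne (Fintype.card ι : ℝ) 0 with h | h <;> simp [hv.inner_mean, h]

theorem norm_sub_mean_sq [Fintype ι] (hv : Orthonormal ℝ v) (i : ι) :
    ‖v i - mean v‖ ^ 2 = 1 - (Fintype.card ι : ℝ)⁻¹ := by
  rw [norm_sub_sq_real, hv.inner_mean, hv.norm_mean_sq, hv.norm_eq_one]
  ring

theorem one_div_card_mul_sum_norm_sub_sq [Fintype ι] [Nonempty ι] (hv : Orthonormal ℝ v)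
    (h : E) :
    1 / (Fintype.card ι : ℝ) * ∑ i, ‖h - v i‖ ^ 2 =
      ‖h - mean v‖ ^ 2 + ((Fintype.card ι : ℝ) - 1) / Fintype.card ι := by
  have hcard : (Fintype.card ι : ℝ) ≠ 0 := by positivity
  simp only [sum_norm_sub_sq_eq_card_mul_add, hv.norm_sub_mean_sq, Finset.sum_const, Finset.card_univ,
    nsmul_eq_mul]
  field_simp

theorem norm_mean_comp_sub_mean_sq [Fintype ι] [Fintype κ] [Nonempty κ] (hv : Orthonormal ℝ v)
    (z : κ → ι) :
    ‖mean (v ∘ z) - mean v‖ ^ 2 = ‖mean (v ∘ z)‖ ^ 2 - (Fintype.card ι : ℝ)⁻¹ := by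
  have hcard : (Fintype.card κ : ℝ) ≠ 0 := by positivity
  have hinner : inner ℝ (mean (v ∘ z)) (mean v) = (Fintype.card ι : ℝ)⁻¹ := by
    simp [inner_mean_left, hv.inner_mean, hcard]
  rw [norm_sub_sq_real, hinner, hv.norm_mean_sq]
  ring

theorem card_le_norm_sum_comp_sq [Fintype κ] (hv : Orthonormal ℝ v) (z : κ → ι) :
    (Fintype.card κ : ℝ) ≤ ‖∑ k, v (z k)‖ ^ 2 := by
  classical
  have hinner : ∀ k l, inner ℝ (v (z k)) (v (z l)) = if z k = z l then 1 else 0 :=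
    fun k l => orthonormal_iff_ite.mp hv _ _
  rw [← real_inner_self_eq_norm_sq, sum_inner]
  simp only [inner_sum, hinner]
  calc (Fintype.card κ : ℝ) = ∑ k : κ, (if z k = z k then 1 else 0 : ℝ) := by simp
    _ ≤ _ := Finset.sum_le_sum fun k _ =>
      Finset.single_le_sum (f := fun l => if z k = z l then (1 : ℝ) else 0)
        (fun l _ => by positivity) (Finset.mem_univ k)

theorem inv_card_le_norm_mean_comp_sq [Fintype κ] (hv : Orthonormal ℝ v) (z : κ → ι) :
    (Fintype.card κ : ℝ)⁻¹ ≤ ‖mean (v ∘ z)‖ ^ 2 := by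
  rw [mean, norm_smul, mul_pow, norm_inv, RCLike.norm_natCast]
  calc (Fintype.card κ : ℝ)⁻¹ = (Fintype.card κ : ℝ)⁻¹ ^ 2 * Fintype.card κ := by
        rcases eq_or_ne (Fintype.card κ : ℝ) 0 with h | h <;> field_simp [h]
    _ ≤ _ := by gcongr; exact hv.card_le_norm_sum_comp_sq z

end Orthonormal

end Mean

theorem tendsto_ratio_add_sub_one_div_natCast (c : ℝ) :
    Tendsto (fun d : ℕ => (((d : ℝ) - 1) / d + c - 1 / d) / (((d : ℝ) - 1) / d)) atTop
      (𝓝 (1 + c)) := by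
  have hlim : Tendsto (fun d : ℕ => (1 - 2 * (d : ℝ)⁻¹ + c) / (1 - (d : ℝ)⁻¹)) atTop
      (𝓝 ((1 - 2 * 0 + c) / (1 - 0))) := by
    have h := tendsto_inv_atTop_nhds_zero_nat (𝕜 := ℝ)
    exact (((tendsto_const_nhds.sub (h.const_mul 2)).add_const c).div
      (tendsto_const_nhds.sub h) (by norm_num))
  rw [show ((1 : ℝ) - 2 * 0 + c) / (1 - 0) = 1 + c by ring] at hlim
  refine hlim.congr' ?_
  filter_upwards [eventually_ge_atTop 1] with d hd
  have hd' : (d : ℝ) ≠ 0 := by positivity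
  field_simp
  ring

theorem basis_vectors_mean_estimation
    (n : ℕ) (hn : 1 ≤ n) :
    (∀ d : ℕ, n < d →
      ∀ L : EuclideanSpace ℝ (Fin d) → ℝ,
        (∀ h, L h = (1 / (d : ℝ)) * ∑ i, ‖h - EuclideanSpace.single i (1:ℝ)‖^2) →
        ((∀ h, ((d : ℝ) - 1) / d ≤ L h) ∧
         (∃ h, L h = ((d : ℝ) - 1) / d) ∧
         (∀ z : Fin n → Fin d,
            ((d : ℝ) - 1) / d + 1 / n - 1 / d ≤
              L ((n : ℝ)⁻¹ • ∑ i, EuclideanSpace.single (z i) (1:ℝ))) ∧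
         (∃ z : Fin n → Fin d,
            L ((n : ℝ)⁻¹ • ∑ i, EuclideanSpace.single (z i) (1:ℝ)) =
              ((d : ℝ) - 1) / d + 1 / n - 1 / d))) ∧
    Tendsto (fun d : ℕ => ((((d : ℝ) - 1) / d + 1 / n - 1 / d) / (((d : ℝ) - 1) / d)))
      atTop (nhds (((n : ℝ) + 1) / n)) := by
  have : NeZero n := ⟨by omega⟩
  refine ⟨fun d hnd L hL => ?_, ?_⟩
  · have : NeZero d := ⟨by omega⟩
    set e : Fin d → EuclideanSpace ℝ (Fin d) := fun i => EuclideanSpace.single i 1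
    have he : Orthonormal ℝ e := EuclideanSpace.orthonormal_single
    have hL' : ∀ h, L h = ‖h - mean e‖ ^ 2 + ((d : ℝ) - 1) / d := fun h => by
      simpa only [Fintype.card_fin, hL] using he.one_div_card_mul_sum_norm_sub_sq h
    have hsel : ∀ z : Fin n → Fin d, L ((n : ℝ)⁻¹ • ∑ i, EuclideanSpace.single (z i) (1:ℝ)) =
        ‖mean (e ∘ z)‖ ^ 2 - 1 / d + ((d : ℝ) - 1) / d := fun z => by
      have hdist := he.norm_mean_comp_sub_mean_sq z
      rw [Fintype.card_fin, ← one_div] at hdist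
      rw [← hdist, ← hL']
      simp [mean, e]
    refine ⟨fun h => ?_, ⟨mean e, by simp [hL']⟩, fun z => ?_, ⟨Fin.castLE hnd.le, ?_⟩⟩
    · rw [hL']
      linarith [sq_nonneg ‖h - mean e‖]
    · have hnorm := he.inv_card_le_norm_mean_comp_sq z
      rw [Fintype.card_fin, ← one_div] at hnorm
      rw [hsel]
      linarith
    · rw [hsel, (he.comp _ (Fin.castLE_injective hnd.le)).norm_mean_sq, Fintype.card_fin, one_div]
      ring
  · convert tendsto_ratio_add_sub_one_div_natCast (1 / n : ℝ) using 2
    field_simp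
end

section
/- Let v₁,…,v_{d+1} ∈ ℝ^d be vertices of a regular simplex such that each vertex is at distance 1 from the affine hyperplane spanned by the other d vertices, and let f_i(w) = ‖w − v_i‖^P for P > 2. If w minimizes Σ_{i≠j} α_i f_i(w) for some j and nonnegative weights α_i, then w lies in the affine hyperplane spanned by {v_i : i ≠ j}, and hence f_j(w) ≥ 1. -/
/-!
Orthogonal projection onto an affine subspace `S` moves a point off `S` strictly closer to every
point of `S` (Pythagoras), so it strictly lowers any nonnegatively weighted sum of increasing
functions of the distances to points of `S`, as soon as one weight is positive. Hence a minimiser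
lies in `S`, and its distance to the dropped vertex is at least `infDist (v j) S = 1`.
-/

open Set

namespace EuclideanGeometry

variable {𝕜 V P : Type*} [RCLike 𝕜] [NormedAddCommGroup V] [InnerProductSpace 𝕜 V]
  [MetricSpace P] [NormedAddTorsor V P]

theorem dist_orthogonalProjection_lt_of_notMem {s : AffineSubspace 𝕜 P} [Nonempty s]
    [s.direction.HasOrthogonalProjection] {p q : P} (hp : p ∉ s) (hq : q ∈ s) :
    dist q (orthogonalProjection s p) < dist q p := by
  have hpyth := dist_sq_eq_dist_orthogonalProjection_sq_add_dist_orthogonalProjection_sq p hq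
  have hoff : 0 < dist p (orthogonalProjection s p) :=
    dist_pos.2 fun h ↦ hp (h ▸ orthogonalProjection_mem p)
  rw [mul_self_lt_mul_self_iff dist_nonneg dist_nonneg, hpyth]
  linarith [mul_pos hoff hoff]

theorem mem_of_isMinOn_sum_mul_comp_dist {ι : Type*} {s : AffineSubspace 𝕜 P}
    [s.direction.HasOrthogonalProjection] {t : Finset ι} {v : ι → P} (hv : ∀ i ∈ t, v i ∈ s)
    {α : ι → ℝ} (hα : ∀ i ∈ t, 0 ≤ α i) (hpos : ∃ i ∈ t, 0 < α i)
    {g : ℝ → ℝ} (hg : StrictMonoOn g (Ici 0)) {w : P}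
    (hw : IsMinOn (fun u ↦ ∑ i ∈ t, α i * g (dist u (v i))) univ w) : w ∈ s := by
  obtain ⟨i₀, hi₀, hα₀⟩ := hpos
  have : Nonempty s := ⟨⟨v i₀, hv i₀ hi₀⟩⟩
  by_contra hws
  set w' : P := ↑(orthogonalProjection s w)
  have hcloser : ∀ i ∈ t, g (dist w' (v i)) < g (dist w (v i)) := fun i hi ↦ by
    rw [dist_comm w', dist_comm w]
    exact hg (mem_Ici.2 dist_nonneg) (mem_Ici.2 dist_nonneg)
      (dist_orthogonalProjection_lt_of_notMem hws (hv i hi))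
  have hlt : ∑ i ∈ t, α i * g (dist w' (v i)) < ∑ i ∈ t, α i * g (dist w (v i)) :=
    Finset.sum_lt_sum (fun i hi ↦ mul_le_mul_of_nonneg_left (hcloser i hi).le (hα i hi))
      ⟨i₀, hi₀, mul_lt_mul_of_pos_left (hcloser i₀ hi₀) hα₀⟩
  exact (hw (mem_univ w')).not_gt hlt

end EuclideanGeometry

theorem simplex_dropping_vertex_general
    (d : ℕ) (v : Fin (d+1) → EuclideanSpace ℝ (Fin d))
    (hdist : ∀ j, Metric.infDist (v j)
        ((affineSpan ℝ (v '' {i | i ≠ j}) : AffineSubspace ℝ (EuclideanSpace ℝ (Fin d))) :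
          Set (EuclideanSpace ℝ (Fin d))) = 1)
    (P : ℝ) (hP : 2 < P)
    (j : Fin (d+1)) (α : Fin (d+1) → ℝ) (hα : ∀ i, 0 ≤ α i)
    (hpos : ∃ i ∈ Finset.univ.erase j, 0 < α i)
    (w : EuclideanSpace ℝ (Fin d))
    (hw : IsMinOn (fun u => ∑ i ∈ Finset.univ.erase j, α i * ‖u - v i‖ ^ P) Set.univ w) :
    w ∈ affineSpan ℝ (v '' {i | i ≠ j}) ∧ 1 ≤ ‖w - v j‖ ^ P := by
  have hwS : w ∈ affineSpan ℝ (v '' {i | i ≠ j}) := by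
    refine EuclideanGeometry.mem_of_isMinOn_sum_mul_comp_dist (g := fun x ↦ x ^ P)
      (fun i hi ↦ subset_affineSpan ℝ _ (mem_image_of_mem v (Finset.ne_of_mem_erase hi)))
      (fun i _ ↦ hα i) hpos (Real.strictMonoOn_rpow_Ici_of_exponent_pos (by linarith)) ?_
    simpa only [dist_eq_norm] using hw
  refine ⟨hwS, Real.one_le_rpow ?_ (by linarith)⟩
  calc (1 : ℝ) = Metric.infDist (v j) (affineSpan ℝ (v '' {i | i ≠ j})) := (hdist j).symm
    _ ≤ dist (v j) w := Metric.infDist_le_dist_of_mem hwS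
    _ = ‖w - v j‖ := by rw [dist_comm, dist_eq_norm]

theorem simplex_dropping_vertex
    (d : ℕ) (hd : 1 ≤ d) (v : Fin (d+1) → EuclideanSpace ℝ (Fin d))
    (hreg : ∀ i j k l, i ≠ j → k ≠ l → dist (v i) (v j) = dist (v k) (v l))
    (hdist : ∀ j, Metric.infDist (v j)
        ((affineSpan ℝ (v '' {i | i ≠ j}) : AffineSubspace ℝ (EuclideanSpace ℝ (Fin d))) :
          Set (EuclideanSpace ℝ (Fin d))) = 1)
    (P : ℝ) (hP : 2 < P)
    (j : Fin (d+1)) (α : Fin (d+1) → ℝ) (hα : ∀ i, 0 ≤ α i)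
    (hpos : ∃ i ∈ Finset.univ.erase j, 0 < α i)
    (w : EuclideanSpace ℝ (Fin d))
    (hw : IsMinOn (fun u => ∑ i ∈ Finset.univ.erase j, α i * ‖u - v i‖ ^ P) Set.univ w) :
    w ∈ affineSpan ℝ (v '' {i | i ≠ j}) ∧ 1 ≤ ‖w - v j‖ ^ P :=
  simplex_dropping_vertex_general d v hdist P hP j α hα hpos w hw
end
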